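/- arXiv:2503.22110 — 5 statements merged into one kernel-verified Lean document; each statement's English description precedes it below -/
import Mathlib

section
/- There exists a finite bounded poset that is not graded, is CC-shellable, and is not CL-shellable. -/
open scoped Classical

variable {P : Type*} [PartialOrder P] [BoundedOrder P]

/-- `CoverList l` : consecutive entries of `l` are cover relations. -/
def CoverList : List P → Prop
  | x :: y :: t => x ⋖ y ∧ CoverList (y :: t)
  | _ => True

/-- `SatFromTo l x y` : `l` is a saturated chain (i.e. a maximal chain of the interval
`[x,y]`) starting at `x` and ending at `y`. -/
def SatFromTo (l : List P) (x y : P) : Prop :=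
  l ≠ [] ∧ l.head? = some x ∧ l.getLast? = some y ∧ CoverList l

/-- `m` is a maximal chain of the bounded poset `P`. -/
def MaxChainOfP (m : List P) : Prop := SatFromTo m ⊥ ⊤

/-- `r` is a root of `x`, i.e. a maximal chain of `[⊥, x]` (it contains `x`). -/
def RootOf (r : List P) (x : P) : Prop := SatFromTo r ⊥ x

/-- The label sequence of a chain (the second argument, which starts at the last
element of the root `r`) with respect to a chain-edge labeling `lab`. -/
def labelSeq {Λ : Type*} (lab : List P → P → P → Λ) : List P → List P → List Λ
  | r, x :: y :: t => lab r x y :: labelSeq lab (r ++ [y]) (y :: t)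
  | _, _ => []

/-- The pair of rooted cover relations `[u,v]_r`, `[v,w]_{r∪{v}}` is a topological
ascent: its label sequence lexicographically strictly precedes the label sequence of
every other maximal chain of `[u,w]_r`. -/
def TopAscent (lab : List P → P → P → ℤ) (r : List P) (u v w : P) : Prop :=
  ∀ c : List P, SatFromTo c u w → c ≠ [u, v, w] →
    List.Lex (· < ·) (labelSeq lab r [u, v, w]) (labelSeq lab r c)

/-- The chain (second argument) with root `r` is topologically ascending. -/
def TopAscending (lab : List P → P → P → ℤ) : List P → List P → Prop
  | r, u :: v :: w :: t => TopAscent lab r u v w ∧ TopAscending lab (r ++ [v]) (v :: w :: t)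
  | _, _ => True

/-- TCL-labeling : every rooted interval has a unique topologically ascending
maximal chain. -/
def IsTCLLabeling (lab : List P → P → P → ℤ) : Prop :=
  ∀ x y : P, x ≤ y → ∀ r : List P, RootOf r x →
    ∃! c : List P, SatFromTo c x y ∧ TopAscending lab r c

/-- CC-labeling : a TCL-labeling such that in every rooted interval distinct maximal
chains get distinct label sequences, none of which is a prefix of another. -/
def IsCCLabeling (lab : List P → P → P → ℤ) : Prop :=
  IsTCLLabeling lab ∧
    ∀ x y : P, x ≤ y → ∀ r : List P, RootOf r x →
      ∀ c c' : List P, SatFromTo c x y → SatFromTo c' x y → c ≠ c' →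
        ¬ labelSeq lab r c <+: labelSeq lab r c'

/-- CL-labeling with labels in an arbitrary poset `Λ`. -/
def IsCLLabeling {Λ : Type*} [PartialOrder Λ] (lab : List P → P → P → Λ) : Prop :=
  ∀ x y : P, x ≤ y → ∀ r : List P, RootOf r x →
    ∃ c : List P, (SatFromTo c x y ∧ List.Chain' (· < ·) (labelSeq lab r c)) ∧
      (∀ c' : List P, SatFromTo c' x y → List.Chain' (· < ·) (labelSeq lab r c') → c' = c) ∧
      (∀ c' : List P, SatFromTo c' x y → c' ≠ c →
        List.Lex (· < ·) (labelSeq lab r c) (labelSeq lab r c'))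

def TCLShellable (P : Type*) [PartialOrder P] [BoundedOrder P] : Prop :=
  ∃ lab : List P → P → P → ℤ, IsTCLLabeling lab

def CCShellable (P : Type*) [PartialOrder P] [BoundedOrder P] : Prop :=
  ∃ lab : List P → P → P → ℤ, IsCCLabeling lab

def CLShellable (P : Type*) [PartialOrder P] [BoundedOrder P] : Prop :=
  ∃ (Λ : Type) (_ : PartialOrder Λ) (lab : List P → P → P → Λ), IsCLLabeling lab

/-- `P` is graded : all maximal chains of `P` have the same length. -/
def Graded (P : Type*) [PartialOrder P] [BoundedOrder P] : Prop :=
  ∀ c c' : List P, MaxChainOfP c → MaxChainOfP c' → c.length = c'.length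

/-- `Γ` is a total order `m₁, …, m_t` on the maximal chains of `P`. -/
def Enumerates (Γ : List (List P)) : Prop :=
  Γ.Nodup ∧ ∀ m : List P, m ∈ Γ ↔ MaxChainOfP m

/-- `Γ` is a total order on the maximal chains which agrees with (is consistent with)
the lexicographic order on maximal chains induced by `lab`. -/
def AgreesWithLex (lab : List P → P → P → ℤ) (Γ : List (List P)) : Prop :=
  Enumerates Γ ∧ ∀ i j : ℕ, i < j → j < Γ.length →
    ¬ List.Lex (· < ·) (labelSeq lab [(⊥ : P)] (Γ.getD j []))
        (labelSeq lab [(⊥ : P)] (Γ.getD i []))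

/-- Position in `Γ` of the earliest maximal chain containing all elements of `l`. -/
noncomputable def fidx (Γ : List (List P)) (l : List P) : ℕ :=
  Γ.findIdx fun m => decide (∀ a ∈ l, a ∈ m)

/-- `a'` witnesses that the earliest chain containing `r ∪ {a}` is "sandwiched" by
two chains containing `r ∪ {a'}`. -/
def Sandwiched (Γ : List (List P)) (r : List P) (x a a' : P) : Prop :=
  x ⋖ a' ∧ fidx Γ (r ++ [a']) < fidx Γ (r ++ [a]) ∧
    ∃ l : ℕ, fidx Γ (r ++ [a]) < l ∧ l < Γ.length ∧ ∀ w ∈ r ++ [a'], w ∈ Γ.getD l []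

/-- The label (a position in `Γ`) that the CE-labeling determined by the total order
`Γ` assigns to the rooted cover relation `[x,a]_r`. -/
noncomputable def detLabel (Γ : List (List P)) (r : List P) (x a : P) : ℕ :=
  if h : ∃ n : ℕ, ∃ a' : P, Sandwiched Γ r x a a' ∧ fidx Γ (r ++ [a']) = n then
    detLabel Γ r x (Nat.find_spec h).choose
  else fidx Γ (r ++ [a])
termination_by fidx Γ (r ++ [a])
decreasing_by exact ((Nat.find_spec h).choose_spec).1.2.1

/-- The CE-labeling of `P` determined by the total order `Γ` on maximal chains. -/
noncomputable def detLabeling (Γ : List (List P)) : List P → P → P → ℤ :=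
  fun r x a => (detLabel Γ r x a : ℤ)

/-- `Ω` is a recursive first atom set (RFAS) for `P`. -/
def IsRFAS (Ω : List P → P → P → P) : Prop :=
  (∀ c : List P, CoverList c → c.length ≤ 2) ∨
    ∀ x y : P, x < y → ∀ r : List P, RootOf r x →
      (x ⋖ Ω r x y ∧ Ω r x y ≤ y) ∧
      ∀ a : P, x ⋖ a → a < y →
        (a = Ω r x y ↔ a = Ω r x (Ω (r ++ [a]) a y)) ∧
        (a ≠ Ω r x y →
          ∃ (p : ℕ) (A B : ℕ → P), 1 ≤ p ∧
            (∀ i, 1 ≤ i → i ≤ p → x ⋖ A i ∧ A i ≤ y) ∧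
            A p = Ω r x (Ω (r ++ [a]) a y) ∧ A 1 = Ω r x y ∧
            ∀ i, 1 ≤ i → i ≤ p - 1 →
              B i = Ω (r ++ [A (i + 1)]) (A (i + 1)) y ∧ A i = Ω r x (B i))

/-- The chain (second argument, a saturated chain from the last element of the root to
`y`) is the first atom chain `c(r, x, y)` of the rooted interval with top `y`:
each step except possibly the last follows the first atoms of `Ω`. -/
def IsFAC (Ω : List P → P → P → P) (y : P) : List P → List P → Prop
  | r, x :: z :: t => (t ≠ [] → z = Ω r x y) ∧ IsFAC Ω y (r ++ [z]) (z :: t)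
  | _, _ => True

/-- The chain (second argument) with root `r` contains a pseudo descent with respect
to `Ω`. -/
def HasPseudoDescent (Ω : List P → P → P → P) : List P → List P → Prop
  | r, u :: v :: w :: t => v ≠ Ω r u w ∨ HasPseudoDescent Ω (r ++ [v]) (v :: w :: t)
  | _, _ => False

/-- `m → m'` : `m` is obtained from the maximal chain `m'` by replacing a pseudo
descent `x ⋖ y ⋖ z` of `m'` with the first atom chain `c(m^x, x, z)`. -/
def StepRel (Ω : List P → P → P → P) (m m' : List P) : Prop :=
  MaxChainOfP m ∧ MaxChainOfP m' ∧
    ∃ (x y z : P) (r d c : List P),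
      RootOf r x ∧ x ⋖ y ∧ y ⋖ z ∧ y ≠ Ω r x z ∧
      m' = r ++ y :: z :: d ∧
      SatFromTo c x z ∧ IsFAC Ω z r c ∧
      m = r ++ c.tail ++ d

/-- `Γ` is a linear extension of the partial order `⪯` (the reflexive-transitive
closure of `→`) on the maximal chains of `P`. -/
def LinExtOf (Ω : List P → P → P → P) (Γ : List (List P)) : Prop :=
  Enumerates Γ ∧ ∀ i j : ℕ, i < Γ.length → j < Γ.length →
    Relation.ReflTransGen (StepRel Ω) (Γ.getD i []) (Γ.getD j []) → i ≤ j

/-- `Γ`, a total order on the facets (maximal chains) of the order complex `Δ(P)`,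
is a shelling order: for each `j` the intersection of the `j`-th facet with the union
of the earlier ones is pure of dimension one less than that of the `j`-th facet. -/
def IsShelling (Γ : List (List P)) : Prop :=
  ∀ j : ℕ, 0 < j → j < Γ.length → ∀ S : Finset P,
    S ⊆ (Γ.getD j []).toFinset → (∃ i < j, S ⊆ (Γ.getD i []).toFinset) →
    ∃ T : Finset P, S ⊆ T ∧ T ⊆ (Γ.getD j []).toFinset ∧
      (∃ i < j, T ⊆ (Γ.getD i []).toFinset) ∧
      T.card + 1 = (Γ.getD j []).toFinset.card

/-- Condition (LC) for a linear extension `Γ` of `⪯`. -/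
def LCCondition (Γ : List (List P)) : Prop :=
  ∀ i j k : ℕ, i < j → j < k → k < Γ.length →
    ∀ (r : List P) (x y y' z : P), RootOf r x → x ⋖ y → y ⋖ z → x ⋖ y' →
      (∀ w ∈ r ++ [y, z], w ∈ Γ.getD i []) →
      (∀ w ∈ r ++ [y, z], w ∈ Γ.getD k []) →
      (∀ w ∈ r ++ [y'], w ∈ Γ.getD j []) → y' = y

/-- `Ω` is a labeling-compatible recursive first atom set (LCRFAS). -/
def IsLCRFAS (Ω : List P → P → P → P) : Prop :=
  IsRFAS Ω ∧ ∃ Γ : List (List P), LinExtOf Ω Γ ∧ LCCondition Γ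

/-- The CE-labeling `lab` is compatible with the RFAS `Ω` : in every rooted interval
the first atom lies on a lexicographically smallest maximal chain. -/
def Compatible (lab : List P → P → P → ℤ) (Ω : List P → P → P → P) : Prop :=
  ∀ x y : P, x < y → ∀ r : List P, RootOf r x →
    ∃ c : List P, SatFromTo c x y ∧ Ω r x y ∈ c ∧
      ∀ c' : List P, SatFromTo c' x y →
        ¬ List.Lex (· < ·) (labelSeq lab r c') (labelSeq lab r c)

/-!
In the nine-element poset `Pt`, the maximal chains `x0 ⋖ x7 ⋖ x1 ⋖ x8` and
`x0 ⋖ x6 ⋖ x4 ⋖ x1 ⋖ x8` have different lengths. Under a CL-labeling, the intervals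
`[x0, x4]` and `[x6, x1]` are chains, so their labels increase; hence in `[x0, x1]` the chain
through `x6, x4` is the increasing one and must lexicographically precede `x0 ⋖ x7 ⋖ x1`, which
forces `λ(x0 ⋖ x6) < λ(x0 ⋖ x7)`. The interval `[x0, x3]`, with chains through `x7, x5` and
through `x6`, forces the opposite inequality. CC-shellability is witnessed by an explicit
labeling, verified by enumerating the saturated chains of every rooted interval.
-/

section SatFromTo

variable {α : Type*} [PartialOrder α] {x y z : α} {c : List α}

theorem coverList_iff_isChain : ∀ {l : List α}, CoverList l ↔ l.IsChain (· ⋖ ·)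
  | [] | [_] => by simp [CoverList]
  | _ :: _ :: _ => by simp [CoverList, coverList_iff_isChain]

theorem satFromTo_iff :
    SatFromTo c x y ↔ c.head? = some x ∧ c.getLast? = some y ∧ c.IsChain (· ⋖ ·) := by
  rw [SatFromTo, coverList_iff_isChain]
  exact ⟨fun h => h.2, fun h => ⟨by rintro rfl; simp at h, h⟩⟩

theorem satFromTo_singleton_iff : SatFromTo [z] x y ↔ x = z ∧ y = z := by
  simp [satFromTo_iff, eq_comm]

theorem satFromTo_cons_cons_iff {a : α} {t : List α} :
    SatFromTo (z :: a :: t) x y ↔ x = z ∧ z ⋖ a ∧ SatFromTo (a :: t) a y := by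
  simp only [satFromTo_iff, List.head?_cons, Option.some.injEq, List.getLast?_cons_cons,
    List.isChain_cons_cons]
  tauto

theorem SatFromTo.le : ∀ {c : List α} {x y : α}, SatFromTo c x y → x ≤ y
  | [], _, _, h => absurd rfl h.1
  | [_], _, _, h => by obtain ⟨rfl, rfl⟩ := satFromTo_singleton_iff.mp h; rfl
  | _ :: _ :: _, _, _, h => by
    obtain ⟨rfl, hcov, hrest⟩ := satFromTo_cons_cons_iff.mp h
    exact hcov.le.trans hrest.le

theorem satFromTo_self_iff : SatFromTo c x x ↔ c = [x] := by
  refine ⟨fun h => ?_, by rintro rfl; exact satFromTo_singleton_iff.mpr ⟨rfl, rfl⟩⟩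
  match c, h with
  | [_], h => obtain ⟨rfl, -⟩ := satFromTo_singleton_iff.mp h; rfl
  | _ :: _ :: _, h =>
    obtain ⟨rfl, hcov, hrest⟩ := satFromTo_cons_cons_iff.mp h
    exact absurd hrest.le hcov.lt.not_ge

theorem SatFromTo.nodup (h : SatFromTo c x y) : c.Nodup :=
  (List.isChain_iff_pairwise.mp ((satFromTo_iff.mp h).2.2.imp fun _ _ h => h.lt)).imp ne_of_lt

theorem SatFromTo.snoc (h : SatFromTo c x y) (hyz : y ⋖ z) : SatFromTo (c ++ [z]) x z := by
  obtain ⟨hhead, hlast, hchain⟩ := satFromTo_iff.mp h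
  refine satFromTo_iff.mpr ⟨?_, by simp, hchain.append (List.isChain_singleton z) ?_⟩
  · cases c <;> simp_all
  · simp_all

end SatFromTo

section SatChains

variable {α : Type*} [PartialOrder α] [DecidableEq α] [DecidableRel ((· ≤ ·) : α → α → Prop)]
  [DecidableRel ((· ⋖ ·) : α → α → Prop)]

def satChainsAux (elems : List α) : ℕ → α → α → List (List α)
  | 0, _, _ => []
  | n + 1, x, y =>
    if x = y then [[x]] else
      (elems.filter fun a => x ⋖ a ∧ a ≤ y).flatMap fun a => (satChainsAux elems n a y).map (x :: ·)

theorem mem_satChainsAux {elems : List α} (helems : ∀ a, a ∈ elems) :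
    ∀ (n : ℕ) (x y : α) (c : List α),
      c ∈ satChainsAux elems n x y ↔ SatFromTo c x y ∧ c.length ≤ n
  | 0, x, y, c => by
    cases c <;> simp [satChainsAux, SatFromTo]
  | n + 1, x, y, c => by
    by_cases hxy : x = y
    · subst hxy
      simp only [satChainsAux, if_pos, List.mem_singleton, satFromTo_self_iff]
      exact ⟨fun h => ⟨h, by simp [h]⟩, And.left⟩
    · simp only [satChainsAux, if_neg hxy, List.mem_flatMap, List.mem_filter, List.mem_map,
        decide_eq_true_eq, mem_satChainsAux helems n]
      match c with
      | [] => simp [SatFromTo]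
      | [z] =>
        refine iff_of_false ?_ fun ⟨h, _⟩ => ?_
        · rintro ⟨_, -, _, ⟨hsat, -⟩, -, rfl⟩
          exact hsat.1 rfl
        · obtain ⟨rfl, rfl⟩ := satFromTo_singleton_iff.mp h
          exact hxy rfl
      | z :: a :: t =>
        simp only [satFromTo_cons_cons_iff, List.cons.injEq, List.length_cons]
        constructor
        · rintro ⟨b, ⟨-, hxb, -⟩, _, ⟨hsat, hlen⟩, rfl, rfl⟩
          obtain rfl : a = b := by simpa using (satFromTo_iff.mp hsat).1
          exact ⟨⟨rfl, hxb, hsat⟩, by simpa using hlen⟩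
        · rintro ⟨⟨rfl, hxa, hsat⟩, hlen⟩
          exact ⟨a, ⟨helems a, hxa, hsat.le⟩, a :: t, ⟨hsat, by simpa using hlen⟩, rfl, rfl⟩

def satChains (elems : List α) (x y : α) : List (List α) :=
  satChainsAux elems elems.length x y

theorem mem_satChains {elems : List α} (helems : ∀ a, a ∈ elems) {x y : α} {c : List α} :
    c ∈ satChains elems x y ↔ SatFromTo c x y := by
  rw [satChains, mem_satChainsAux helems]
  exact ⟨And.left, fun h => ⟨h, h.nodup.length_le_of_subset fun a _ => helems a⟩⟩

end SatChains

section FiniteCheck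

variable {α : Type*} [PartialOrder α] {chains : α → α → List (List α)} (lab : List α → α → α → ℤ)

theorem topAscent_iff_forall_mem (mem_chains : ∀ {c x y}, c ∈ chains x y ↔ SatFromTo c x y)
    (r : List α) (u v w : α) :
    TopAscent lab r u v w ↔ ∀ c ∈ chains u w, c ≠ [u, v, w] →
      List.Lex (· < ·) (labelSeq lab r [u, v, w]) (labelSeq lab r c) := by
  simp only [TopAscent, mem_chains]

instance TopAscending.decidable [∀ r u v w, Decidable (TopAscent lab r u v w)] :
    ∀ r l, Decidable (TopAscending lab r l)
  | _, [] | _, [_] | _, [_, _] => isTrue trivial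
  | r, u :: v :: w :: t =>
    haveI := TopAscending.decidable (r ++ [v]) (v :: w :: t)
    inferInstanceAs (Decidable (TopAscent lab r u v w ∧ _))

theorem isCCLabeling_iff_forall_mem [BoundedOrder α]
    (mem_chains : ∀ {c x y}, c ∈ chains x y ↔ SatFromTo c x y) :
    IsCCLabeling lab ↔
      (∀ x y, x ≤ y → ∀ r ∈ chains ⊥ x, ∃ c ∈ chains x y, TopAscending lab r c ∧
        ∀ c' ∈ chains x y, TopAscending lab r c' → c' = c) ∧
      ∀ x y, x ≤ y → ∀ r ∈ chains ⊥ x, ∀ c ∈ chains x y, ∀ c' ∈ chains x y, c ≠ c' →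
        ¬ labelSeq lab r c <+: labelSeq lab r c' := by
  simp only [IsCCLabeling, IsTCLLabeling, RootOf, ExistsUnique, mem_chains, and_assoc, and_imp]
  exact and_congr Iff.rfl <| forall₄_congr fun _ _ _ _ => forall_congr' fun _ =>
    ⟨fun h c hc c' => h c c' hc, fun h c c' hc => h c hc c'⟩

end FiniteCheck

section CLLabeling

variable {α Λ : Type*} [PartialOrder α] [BoundedOrder α] [PartialOrder Λ]
  {lab : List α → α → α → Λ} {r : List α}

theorem IsCLLabeling.isChain_labelSeq_of_unique (h : IsCLLabeling lab) {x y : α} {c : List α}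
    (hr : RootOf r x) (hc : ∀ c', SatFromTo c' x y ↔ c' = c) :
    (labelSeq lab r c).IsChain (· < ·) := by
  obtain ⟨c₀, ⟨hc₀, hinc⟩, -⟩ := h x y ((hc c).mpr rfl).le r hr
  rwa [(hc c₀).mp hc₀] at hinc

/-- The chain `x ⋖ a ⋖ a' ⋖ y` is forced to be the increasing one, so it comes
lexicographically first. -/
theorem IsCLLabeling.lab_lt_lab (h : IsCLLabeling lab) {x a a' b y : α} (hr : RootOf r x)
    (hlow : ∀ c, SatFromTo c x a' ↔ c = [x, a, a']) (hup : ∀ c, SatFromTo c a y ↔ c = [a, a', y])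
    (hshort : SatFromTo [x, b, y] x y) : lab r x a < lab r x b := by
  have hxa : x ⋖ a := (satFromTo_cons_cons_iff.mp ((hlow _).mpr rfl)).2.1
  have hlong : SatFromTo [x, a, a', y] x y :=
    satFromTo_cons_cons_iff.mpr ⟨rfl, hxa, (hup _).mpr rfl⟩
  have hinc : (labelSeq lab r [x, a, a', y]).IsChain (· < ·) := by
    have hlow_inc := h.isChain_labelSeq_of_unique hr hlow
    have hup_inc := h.isChain_labelSeq_of_unique (hr.snoc hxa) hup
    simp only [labelSeq, List.isChain_cons_cons, List.isChain_singleton, and_true] at *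
    exact ⟨hlow_inc, hup_inc⟩
  obtain ⟨c, ⟨-, -⟩, huniq, hlex⟩ := h x y hlong.le r hr
  obtain rfl := huniq _ hlong hinc
  have hne : [x, b, y] ≠ [x, a, a', y] := by simp
  have hlt := hlex _ hshort hne
  simp only [labelSeq, List.cons_lex_cons_iff, List.not_lex_nil, and_false, or_false] at hlt
  rcases hlt with hlt | ⟨heq, hlt⟩
  · exact hlt
  · refine absurd (huniq _ hshort ?_) hne
    simp only [labelSeq, List.isChain_cons_cons, List.isChain_singleton, and_true] at hinc
    exact List.isChain_pair.mpr (heq ▸ hinc.1.trans hlt)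

end CLLabeling

namespace CCNotCLExample

inductive Pt | x0 | x1 | x2 | x3 | x4 | x5 | x6 | x7 | x8
  deriving DecidableEq

open Pt

def elems : List Pt := [x0, x1, x2, x3, x4, x5, x6, x7, x8]

theorem mem_elems (a : Pt) : a ∈ elems := by
  cases a <;> decide

instance : Fintype Pt := Fintype.ofList elems mem_elems

/-- Principal down-sets, with `xi` encoded as `i`. The cover relations are
`x0 ⋖ x6, x7`; `x6 ⋖ x3, x4`; `x7 ⋖ x1, x5`; `x5 ⋖ x3`; `x3 ⋖ x2`; `x4 ⋖ x1, x2`; `x1, x2 ⋖ x8`. -/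
def downset : Pt → Finset ℕ
  | x0 => {0}
  | x1 => {0, 1, 4, 6, 7}
  | x2 => {0, 2, 3, 4, 5, 6, 7}
  | x3 => {0, 3, 5, 6, 7}
  | x4 => {0, 4, 6}
  | x5 => {0, 5, 7}
  | x6 => {0, 6}
  | x7 => {0, 7}
  | x8 => {0, 1, 2, 3, 4, 5, 6, 7, 8}

theorem downset_injective : Function.Injective downset := by
  intro a b
  cases a <;> cases b <;> decide

instance : PartialOrder Pt := PartialOrder.lift downset downset_injective

instance : DecidableRel ((· ≤ ·) : Pt → Pt → Prop) :=
  fun a b => inferInstanceAs (Decidable (downset a ⊆ downset b))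

instance : DecidableRel ((· < ·) : Pt → Pt → Prop) :=
  fun a b => inferInstanceAs (Decidable (downset a ⊂ downset b))

instance : DecidableRel ((· ⋖ ·) : Pt → Pt → Prop) :=
  fun a b => decidable_of_iff (a < b ∧ ∀ c ∈ elems, ¬ (a < c ∧ c < b))
    ⟨fun h => ⟨h.1, fun c hac hcb => h.2 c (mem_elems c) ⟨hac, hcb⟩⟩,
      fun h => ⟨h.1, fun _ _ hc => h.2 hc.1 hc.2⟩⟩

instance : BoundedOrder Pt where
  bot := x0
  top := x8
  bot_le := by decide
  le_top := by decide

theorem satFromTo_iff_mem {c : List Pt} {x y : Pt} : SatFromTo c x y ↔ c ∈ satChains elems x y :=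
  (mem_satChains mem_elems).symm

theorem satFromTo_iff_eq_of_satChains_eq {c₀ : List Pt} {x y : Pt}
    (h : satChains elems x y = [c₀]) (c : List Pt) : SatFromTo c x y ↔ c = c₀ := by
  rw [satFromTo_iff_mem, h, List.mem_singleton]

theorem not_graded : ¬ Graded Pt := by
  intro h
  have := h [x0, x7, x1, x8] [x0, x6, x4, x1, x8]
    (satFromTo_iff_mem.mpr (by decide)) (satFromTo_iff_mem.mpr (by decide))
  simp at this

theorem not_clShellable : ¬ CLShellable Pt := by
  rintro ⟨Λ, _, lab, h⟩
  have hroot : RootOf [x0] x0 := satFromTo_iff_mem.mpr (by decide)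
  have h67 : lab [x0] x0 x6 < lab [x0] x0 x7 :=
    h.lab_lt_lab (a' := x4) (y := x1) hroot (satFromTo_iff_eq_of_satChains_eq (by decide))
      (satFromTo_iff_eq_of_satChains_eq (by decide)) (satFromTo_iff_mem.mpr (by decide))
  have h76 : lab [x0] x0 x7 < lab [x0] x0 x6 :=
    h.lab_lt_lab (a' := x5) (y := x3) hroot (satFromTo_iff_eq_of_satChains_eq (by decide))
      (satFromTo_iff_eq_of_satChains_eq (by decide)) (satFromTo_iff_mem.mpr (by decide))
  exact lt_asymm h67 h76

def ccLabel : List Pt → Pt → Pt → ℤ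
  | [x0], x0, x6 => 0
  | [x0], x0, x7 => 0
  | [x0, x6], x6, x3 => 12
  | [x0, x6], x6, x4 => 13
  | [x0, x6, x3], x3, x2 => 6
  | [x0, x6, x3, x2], x2, x8 => 3
  | [x0, x6, x4], x4, x1 => 9
  | [x0, x6, x4], x4, x2 => 8
  | [x0, x6, x4, x1], x1, x8 => 1
  | [x0, x6, x4, x2], x2, x8 => 4
  | [x0, x7], x7, x1 => 14
  | [x0, x7], x7, x5 => 11
  | [x0, x7, x1], x1, x8 => 2
  | [x0, x7, x5], x5, x3 => 10
  | [x0, x7, x5, x3], x3, x2 => 7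
  | [x0, x7, x5, x3, x2], x2, x8 => 5
  | _, _, _ => 0 -- never a rooted cover relation

instance (r : List Pt) (u v w : Pt) : Decidable (TopAscent ccLabel r u v w) :=
  decidable_of_iff _ (topAscent_iff_forall_mem ccLabel (mem_satChains mem_elems) r u v w).symm

theorem isCCLabeling_ccLabel : IsCCLabeling ccLabel :=
  (isCCLabeling_iff_forall_mem ccLabel (mem_satChains mem_elems)).mpr (by decide)

end CCNotCLExample

/-- There exists a finite bounded poset that is not graded, is CC-shellable, and is
not CL-shellable. -/
theorem stmt1 :
    ∃ (P : Type) (_ : PartialOrder P) (_ : BoundedOrder P) (_ : Fintype P),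
      ¬ Graded P ∧ CCShellable P ∧ ¬ CLShellable P :=
  ⟨CCNotCLExample.Pt, inferInstance, inferInstance, inferInstance, CCNotCLExample.not_graded,
    ⟨_, CCNotCLExample.isCCLabeling_ccLabel⟩, CCNotCLExample.not_clShellable⟩
end

section
/- Let P be a finite bounded poset, let Γ: m₁,…,m_t be a total order on the maximal chains of P, and let λ be the CE-labeling of P determined by Γ. Fix a root r from 0̂ to x and let a₁,…,a_s be the atoms of [x,1̂] in the order in which they first appear together with r in a maximal chain of Γ. If λ(r,x,a_k) = λ(r,x,a_l) with k ≤ l, then λ(r,x,a_k) = λ(r,x,a_j) for every j with k ≤ j ≤ l. -/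
open scoped Classical

variable {P : Type*} [PartialOrder P] [BoundedOrder P]

theorem fidx_le_length {α : Type*} (Γ : List (List α)) (l : List α) : fidx Γ l ≤ Γ.length :=
  List.findIdx_le_length

theorem mem_getD_fidx {α : Type*} {Γ : List (List α)} {l : List α}
    (h : fidx Γ l < Γ.length) : ∀ w ∈ l, w ∈ Γ.getD (fidx Γ l) [] := by
  rw [List.getD_eq_getElem Γ [] h]
  exact of_decide_eq_true (List.findIdx_getElem (w := h))

section

variable {α : Type*} [PartialOrder α]

theorem CoverList.isChain_lt : ∀ {m : List α}, CoverList m → m.IsChain (· < ·)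
  | [], _ => List.isChain_nil
  | [_], _ => List.isChain_singleton _
  | _ :: _ :: _, h => List.isChain_cons_cons.2 ⟨h.1.lt, CoverList.isChain_lt h.2⟩

theorem CoverList.eq_of_covBy {m : List α} (hm : CoverList m) {x u v : α}
    (hu : x ⋖ u) (hv : x ⋖ v) (hum : u ∈ m) (hvm : v ∈ m) : u = v := by
  by_contra hne
  have : Std.Symm fun u v : α => u < v ∨ v < u := ⟨fun _ _ => Or.symm⟩
  have hp : m.Pairwise fun u v => u < v ∨ v < u :=
    (List.isChain_iff_pairwise.1 hm.isChain_lt).imp Or.inl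
  rcases hp.forall hum hvm hne with huv | hvu
  · exact hv.2 hu.lt huv
  · exact hu.2 hv.lt hvu

variable {Γ : List (List α)} {r : List α} {x : α}

/-- Two atoms of `[x, ⊤]` cannot lie on a common maximal chain, so below `Γ.length` the
position of first appearance determines the atom. -/
theorem eq_of_fidx_eq [BoundedOrder α] (hΓ : Enumerates Γ) {u v : α} (hu : x ⋖ u)
    (hv : x ⋖ v) (huv : fidx Γ (r ++ [u]) = fidx Γ (r ++ [v]))
    (hlt : fidx Γ (r ++ [u]) < Γ.length) : u = v := by
  have hchain : CoverList (Γ.getD (fidx Γ (r ++ [u])) []) := by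
    rw [List.getD_eq_getElem Γ [] hlt]
    exact ((hΓ.2 _).1 (List.getElem_mem hlt)).2.2.2
  refine hchain.eq_of_covBy hu hv (mem_getD_fidx hlt u (by simp)) ?_
  rw [huv] at hlt ⊢
  exact mem_getD_fidx hlt v (by simp)

theorem Sandwiched.of_fidx_le {a c f : α} (h : Sandwiched Γ r x a f)
    (hfc : fidx Γ (r ++ [f]) < fidx Γ (r ++ [c]))
    (hca : fidx Γ (r ++ [c]) ≤ fidx Γ (r ++ [a])) : Sandwiched Γ r x c f :=
  have ⟨hxf, _, l, hal, hl, hmem⟩ := h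
  ⟨hxf, hfc, l, hca.trans_lt hal, hl, hmem⟩

theorem not_sandwiched_of_fidx_eq_length {a : α} (h : fidx Γ (r ++ [a]) = Γ.length)
    (f : α) : ¬ Sandwiched Γ r x a f :=
  fun ⟨_, _, _, hal, hl, _⟩ => by omega

theorem detLabel_of_not_sandwiched {a : α} (h : ∀ f, ¬ Sandwiched Γ r x a f) :
    detLabel Γ r x a = fidx Γ (r ++ [a]) := by
  rw [detLabel, dif_neg]
  rintro ⟨_, f, hf, -⟩
  exact h f hf

theorem exists_sandwiched_detLabel_eq {a f : α} (hf : Sandwiched Γ r x a f) :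
    ∃ g, Sandwiched Γ r x a g ∧ fidx Γ (r ++ [g]) ≤ fidx Γ (r ++ [f]) ∧
      detLabel Γ r x a = detLabel Γ r x g := by
  have h : ∃ n, ∃ g, Sandwiched Γ r x a g ∧ fidx Γ (r ++ [g]) = n := ⟨_, f, hf, rfl⟩
  obtain ⟨hg, hgn⟩ := (Nat.find_spec h).choose_spec
  exact ⟨_, hg, hgn.trans_le (Nat.find_min' h ⟨f, hf, rfl⟩), by rw [detLabel, dif_pos h]⟩

theorem exists_not_sandwiched_detLabel_eq {a : α} (ha : x ⋖ a) :
    ∃ b, x ⋖ b ∧ fidx Γ (r ++ [b]) ≤ fidx Γ (r ++ [a]) ∧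
      (∀ f, ¬ Sandwiched Γ r x b f) ∧ detLabel Γ r x a = fidx Γ (r ++ [b]) := by
  induction hn : fidx Γ (r ++ [a]) using Nat.strong_induction_on generalizing a with
  | _ n ih =>
  by_cases hs : ∃ f, Sandwiched Γ r x a f
  · obtain ⟨f, hf⟩ := hs
    obtain ⟨g, hg, -, hag⟩ := exists_sandwiched_detLabel_eq hf
    obtain ⟨b, hxb, hbg, hb, hgb⟩ := ih _ (hn ▸ hg.2.1) hg.1 rfl
    exact ⟨b, hxb, hbg.trans (hn ▸ hg.2.1.le), hb, hag.trans hgb⟩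
  · push Not at hs
    exact ⟨a, ha, hn.le, hs, detLabel_of_not_sandwiched hs⟩

theorem detLabel_le_fidx {a : α} (ha : x ⋖ a) : detLabel Γ r x a ≤ fidx Γ (r ++ [a]) := by
  obtain ⟨b, -, hba, -, hab⟩ := exists_not_sandwiched_detLabel_eq (Γ := Γ) (r := r) ha
  exact hab ▸ hba

theorem detLabel_eq_of_fidx_eq [BoundedOrder α] (hΓ : Enumerates Γ) {u v : α} (hu : x ⋖ u)
    (hv : x ⋖ v) (huv : fidx Γ (r ++ [u]) = fidx Γ (r ++ [v])) :
    detLabel Γ r x u = detLabel Γ r x v := by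
  rcases (fidx_le_length Γ (r ++ [u])).lt_or_eq with hlt | htop
  · rw [eq_of_fidx_eq hΓ hu hv huv hlt]
  · rw [detLabel_of_not_sandwiched (not_sandwiched_of_fidx_eq_length htop),
      detLabel_of_not_sandwiched (not_sandwiched_of_fidx_eq_length (huv ▸ htop)), huv]

/-- Induction on the position of `a'`. Since `a'` comes strictly after `a` but shares its
label, it is sandwiched, and its chosen sandwiching atom `f` carries the label too. If `a''`
comes before `f`, induct on `a, a'', f`. Otherwise `f` also sandwiches `a''`, whose chosen
sandwiching atom `g` lies between `f` and the unsandwiched atom `b` carrying the label of `a`;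
induct on `b, g, f`. -/
theorem detLabel_eq_of_fidx_between [BoundedOrder α] (hΓ : Enumerates Γ) {a a'' a' : α}
    (ha : x ⋖ a) (ha'' : x ⋖ a'') (ha' : x ⋖ a')
    (h1 : fidx Γ (r ++ [a]) ≤ fidx Γ (r ++ [a'']))
    (h2 : fidx Γ (r ++ [a'']) ≤ fidx Γ (r ++ [a']))
    (hlab : detLabel Γ r x a = detLabel Γ r x a') :
    detLabel Γ r x a = detLabel Γ r x a'' := by
  induction hn : fidx Γ (r ++ [a']) using Nat.strong_induction_on
    generalizing a a'' a' with
  | _ n ih =>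
  subst hn
  rcases h1.eq_or_lt with h1 | h1
  · exact detLabel_eq_of_fidx_eq hΓ ha ha'' h1
  rcases h2.eq_or_lt with h2 | h2
  · exact hlab.trans (detLabel_eq_of_fidx_eq hΓ ha' ha'' h2.symm)
  have ha'_sand : ∃ f, Sandwiched Γ r x a' f := by
    by_contra! hs
    have := detLabel_le_fidx (Γ := Γ) (r := r) ha
    rw [hlab, detLabel_of_not_sandwiched hs] at this
    omega
  obtain ⟨f₀, hf₀⟩ := ha'_sand
  obtain ⟨f, hf, -, ha'f⟩ := exists_sandwiched_detLabel_eq hf₀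
  have haf := hlab.trans ha'f
  rcases lt_trichotomy (fidx Γ (r ++ [a''])) (fidx Γ (r ++ [f])) with hlt | hfeq | hgt
  · exact ih _ hf.2.1 ha ha'' hf.1 h1.le hlt.le haf rfl
  · exact haf.trans (detLabel_eq_of_fidx_eq hΓ hf.1 ha'' hfeq.symm)
  obtain ⟨g, hg, hgf, ha''g⟩ := exists_sandwiched_detLabel_eq (hf.of_fidx_le hgt h2.le)
  obtain ⟨b, hxb, hba, hb, hab⟩ := exists_not_sandwiched_detLabel_eq (Γ := Γ) (r := r) ha
  have hbg : fidx Γ (r ++ [b]) ≤ fidx Γ (r ++ [g]) := by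
    by_contra! hgb
    exact hb g (hg.of_fidx_le hgb (hba.trans h1.le))
  have hbl : detLabel Γ r x b = fidx Γ (r ++ [b]) := detLabel_of_not_sandwiched hb
  have hbgl := ih _ hf.2.1 hxb hg.1 hf.1 hbg hgf (hbl.trans (hab.symm.trans haf)) rfl
  rw [hab, ← hbl, hbgl, ha''g]

end

theorem stmt2_general {P : Type*} [PartialOrder P] [BoundedOrder P]
    (Γ : List (List P)) (hΓ : Enumerates Γ)
    (x : P) (r : List P)
    (a a'' a' : P) (ha : x ⋖ a) (ha'' : x ⋖ a'') (ha' : x ⋖ a')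
    (h1 : fidx Γ (r ++ [a]) ≤ fidx Γ (r ++ [a'']))
    (h2 : fidx Γ (r ++ [a'']) ≤ fidx Γ (r ++ [a']))
    (heq : detLabel Γ r x a = detLabel Γ r x a') :
    detLabel Γ r x a = detLabel Γ r x a'' :=
  detLabel_eq_of_fidx_between hΓ ha ha'' ha' h1 h2 heq

/-- Proposition 4.5 (i): for the CE-labeling determined by a total order `Γ` on the
maximal chains, if two atoms `a` and `a'` of `[x, ⊤]_r` (with `a` first appearing no
later than `a'`) receive the same label, then every atom `a''` first appearing between
them receives that same label. -/
theorem stmt2 {P : Type*} [PartialOrder P] [BoundedOrder P] [Fintype P]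
    (Γ : List (List P)) (hΓ : Enumerates Γ)
    (x : P) (r : List P) (hr : RootOf r x)
    (a a'' a' : P) (ha : x ⋖ a) (ha'' : x ⋖ a'') (ha' : x ⋖ a')
    (h1 : fidx Γ (r ++ [a]) ≤ fidx Γ (r ++ [a'']))
    (h2 : fidx Γ (r ++ [a'']) ≤ fidx Γ (r ++ [a']))
    (heq : detLabel Γ r x a = detLabel Γ r x a') :
    detLabel Γ r x a = detLabel Γ r x a'' :=
  stmt2_general Γ hΓ x r a a'' a' ha ha'' ha' h1 h2 heq
end

section
/- Let P be a finite bounded poset with a TCL-labeling λ taking values in the integers, and let Γ: m₁,…,m_t be a total order on the maximal chains of P that is consistent with the lexicographic order on maximal chains induced by λ. If r is a saturated chain containing 0̂ that is contained in both m_i and m_k with i < k, then for every j with i ≤ j ≤ k, the label sequence λ(r) is an initial section of the label sequence λ(m_j). -/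
open scoped Classical

variable {P : Type*} [PartialOrder P] [BoundedOrder P]

set_option linter.unusedSectionVars false in
lemma coverList_tail_lt {x : P} : ∀ {l : List P}, CoverList (x :: l) → ∀ a ∈ l, x < a
  | [], _, a, ha => by simp at ha
  | y :: t, h, a, ha => by
    rcases List.mem_cons.1 ha with rfl | ha
    · exact h.1.lt
    · exact h.1.lt.trans (coverList_tail_lt h.2 a ha)

set_option linter.unusedSectionVars false in
lemma satPrefix : ∀ (l m : List P), CoverList l → CoverList m →
    l.head? = m.head? → (∀ a ∈ l, a ∈ m) → l <+: m
  | [], m, _, _, _, _ => List.nil_prefix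
  | x :: l, [], _, _, hh, _ => by simp at hh
  | x :: l, y :: m, hl, hm, hh, hmem => by
    obtain rfl : x = y := by simpa using hh
    match l, hl with
    | [], _ => exact List.cons_prefix_cons.2 ⟨rfl, List.nil_prefix⟩
    | z :: l, hl =>
      have hz : z ∈ m := by
        have := hmem z (by simp)
        rcases List.mem_cons.1 this with h | h
        · exact absurd h.symm hl.1.lt.ne
        · exact h
      match m, hz, hm with
      | w :: m, hz, hm =>
        obtain rfl : z = w := by
          rcases List.mem_cons.1 hz with h | h
          · exact h
          · exact absurd (coverList_tail_lt hm.2 z h) (hl.1.2 hm.1.lt)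
        refine List.cons_prefix_cons.2 ⟨rfl, satPrefix (z :: l) (z :: m) hl.2 hm.2 rfl ?_⟩
        intro a ha
        have hxa : x < a := coverList_tail_lt hl a ha
        rcases List.mem_cons.1 (hmem a (List.mem_cons_of_mem _ ha)) with h | h
        · exact absurd h.symm hxa.ne
        · exact h

set_option linter.unusedSectionVars false in
lemma labelSeq_prefix (lab : List P → P → P → ℤ) :
    ∀ (l ρ u : List P), labelSeq lab ρ l <+: labelSeq lab ρ (l ++ u)
  | [], ρ, u => by simp [labelSeq]
  | [x], ρ, u => by simp [labelSeq]
  | x :: y :: t, ρ, u => by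
    simp only [List.cons_append, labelSeq]
    exact List.cons_prefix_cons.2 ⟨rfl, labelSeq_prefix lab (y :: t) (ρ ++ [y]) u⟩

lemma prefix_between {α : Type*} [LinearOrder α] :
    ∀ (s A B C : List α), s <+: A → s <+: C →
      ¬ List.Lex (· < ·) B A → ¬ List.Lex (· < ·) C B → s <+: B
  | [], _, _, _, _, _, _, _ => List.nil_prefix
  | x :: s, A, B, C, hA, hC, hBA, hCB => by
    obtain ⟨tA, rfl⟩ := hA
    obtain ⟨tC, rfl⟩ := hC
    match B with
    | [] => exact absurd List.Lex.nil hBA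
    | b :: B =>
      rcases lt_trichotomy b x with h | rfl | h
      · exact absurd (List.Lex.rel h) hBA
      · refine List.cons_prefix_cons.2 ⟨rfl, prefix_between s (s ++ tA) B (s ++ tC)
          (List.prefix_append _ _) (List.prefix_append _ _) ?_ ?_⟩
        · exact fun h => hBA (List.Lex.cons h)
        · exact fun h => hCB (List.Lex.cons h)
      · exact absurd (List.Lex.rel h) hCB

/-- If `r` is a saturated chain containing `⊥` contained in both `m_i` and `m_k` with
`i < k` (for a total order `Γ` consistent with the lexicographic order induced by the
TCL-labeling `lab`), then for each `i ≤ j ≤ k` the label sequence of `r` is an initial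
section of the label sequence of `m_j`. -/
theorem stmt4 {P : Type*} [PartialOrder P] [BoundedOrder P] [Fintype P]
    (lab : List P → P → P → ℤ) (hTCL : IsTCLLabeling lab)
    (Γ : List (List P)) (hΓ : AgreesWithLex lab Γ)
    (r : List P) (w : P) (hr : SatFromTo r ⊥ w)
    (i k : ℕ) (hik : i < k) (hk : k < Γ.length)
    (hri : ∀ a ∈ r, a ∈ Γ.getD i []) (hrk : ∀ a ∈ r, a ∈ Γ.getD k []) :
    ∀ j : ℕ, i ≤ j → j ≤ k →
      labelSeq lab [(⊥ : P)] r <+: labelSeq lab [(⊥ : P)] (Γ.getD j []) := by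
  intro j hij hjk
  have hj : j < Γ.length := lt_of_le_of_lt hjk hk
  have hi : i < Γ.length := lt_trans hik hk
  have hmax : ∀ n, n < Γ.length → MaxChainOfP (Γ.getD n []) := by
    intro n hn
    have hmem : Γ.getD n [] ∈ Γ := by
      rw [List.getD_eq_getElem _ _ hn]; exact List.getElem_mem _
    exact (hΓ.1.2 _).1 hmem
  have hpA : labelSeq lab [(⊥ : P)] r <+: labelSeq lab [(⊥ : P)] (Γ.getD i []) := by
    obtain ⟨u, hu⟩ := satPrefix r (Γ.getD i []) hr.2.2.2 (hmax i hi).2.2.2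
      (by rw [hr.2.1, (hmax i hi).2.1]) hri
    rw [← hu]; exact labelSeq_prefix lab r _ u
  have hpC : labelSeq lab [(⊥ : P)] r <+: labelSeq lab [(⊥ : P)] (Γ.getD k []) := by
    obtain ⟨u, hu⟩ := satPrefix r (Γ.getD k []) hr.2.2.2 (hmax k hk).2.2.2
      (by rw [hr.2.1, (hmax k hk).2.1]) hrk
    rw [← hu]; exact labelSeq_prefix lab r _ u
  rcases eq_or_lt_of_le hij with rfl | hlt1
  · exact hpA
  rcases eq_or_lt_of_le hjk with rfl | hlt2
  · exact hpC
  exact prefix_between _ _ _ _ hpA hpC (hΓ.2 i j hlt1 hj) (hΓ.2 j k hlt2 hk)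
end

section
/- Let P be a finite bounded poset with an RFAS Ω, let [x,y]_r be a rooted interval of P, and let m be a maximal chain of [x,y]_r. If m is not the first atom chain c(r,x,y), then m contains a pseudo descent. -/
open scoped Classical

variable {P : Type*} [PartialOrder P] [BoundedOrder P]

lemma coverList_head_le_last' : ∀ l : List P, CoverList l → ∀ u v : P,
    l.head? = some u → l.getLast? = some v → u ≤ v := by
  intro l
  induction l with
  | nil => intro _ u v h; simp at h
  | cons a t ih =>
    intro hc u v hu hv
    cases t with
    | nil =>
      simp at hu hv; subst hu; subst hv; rfl
    | cons b s =>
      obtain ⟨hab, hct⟩ := hc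
      simp at hu; subst hu
      have : b ≤ v := ih hct b v rfl (by rwa [List.getLast?_cons_cons] at hv)
      exact le_trans hab.le this

lemma coverList_append' : ∀ r : List P, CoverList r → ∀ a b : P,
    r.getLast? = some a → a ⋖ b → CoverList (r ++ [b]) := by
  intro r
  induction r with
  | nil => intro _ a b h; simp at h
  | cons w t ih =>
    intro hc a b hl hab
    cases t with
    | nil =>
      simp at hl; subst hl
      exact ⟨hab, trivial⟩
    | cons z s =>
      obtain ⟨hwz, hct⟩ := hc
      rw [List.getLast?_cons_cons] at hl
      exact ⟨hwz, ih hct a b hl hab⟩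

lemma key_fac {P : Type*} [PartialOrder P] [BoundedOrder P]
    (Ω : List P → P → P → P)
    (hΩ : ∀ x y : P, x < y → ∀ r : List P, RootOf r x →
      (x ⋖ Ω r x y ∧ Ω r x y ≤ y) ∧
      ∀ a : P, x ⋖ a → a < y →
        (a = Ω r x y ↔ a = Ω r x (Ω (r ++ [a]) a y)) ∧
        (a ≠ Ω r x y →
          ∃ (p : ℕ) (A B : ℕ → P), 1 ≤ p ∧
            (∀ i, 1 ≤ i → i ≤ p → x ⋖ A i ∧ A i ≤ y) ∧
            A p = Ω r x (Ω (r ++ [a]) a y) ∧ A 1 = Ω r x y ∧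
            ∀ i, 1 ≤ i → i ≤ p - 1 →
              B i = Ω (r ++ [A (i + 1)]) (A (i + 1)) y ∧ A i = Ω r x (B i)))
    (y : P) :
    ∀ m : List P, ∀ (r : List P) (x : P), RootOf r x → SatFromTo m x y →
      ¬ HasPseudoDescent Ω r m → IsFAC Ω y r m := by
  intro m
  induction m with
  | nil => intro r x _ _ _; trivial
  | cons a t ih =>
    intro r x hr hm hnpd
    cases t with
    | nil => trivial
    | cons b t' =>
      cases t' with
      | nil => exact ⟨fun h => absurd rfl h, trivial⟩
      | cons c t'' =>
        obtain ⟨_, hhead, hlast, hcov⟩ := hm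
        simp only [List.head?_cons, Option.some.injEq] at hhead
        subst hhead
        obtain ⟨hab, hbc, hcov'⟩ := hcov
        -- pseudo descent negation
        have hb : b = Ω r a c := by
          by_contra h
          exact hnpd (Or.inl h)
        have hnpd2 : ¬ HasPseudoDescent Ω (r ++ [b]) (b :: c :: t'') :=
          fun h => hnpd (Or.inr h)
        obtain ⟨hrne, hrhead, hrlast, hrcov⟩ := hr
        have hrb : RootOf (r ++ [b]) b := by
          refine ⟨by simp, ?_, by simp, coverList_append' r hrcov a b hrlast hab⟩
          cases r with
          | nil => exact absurd rfl hrne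
          | cons w s => simpa using hrhead
        have hlast' : (b :: c :: t'').getLast? = some y := by
          rwa [List.getLast?_cons_cons] at hlast
        have hmb : SatFromTo (b :: c :: t'') b y :=
          ⟨by simp, rfl, hlast', hbc, hcov'⟩
        have hfac : IsFAC Ω y (r ++ [b]) (b :: c :: t'') := ih (r ++ [b]) b hrb hmb hnpd2
        refine ⟨fun _ => ?_, hfac⟩
        -- show b = Ω r x y
        cases t'' with
        | nil =>
          -- c = y
          have hcy : c = y := by simpa using hlast
          rw [← hcy]; exact hb
        | cons d t''' =>
          -- c < y
          have hcy : c ≤ y := by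
            have : (c :: d :: t''').getLast? = some y := by
              rwa [List.getLast?_cons_cons] at hlast'
            exact coverList_head_le_last' (c :: d :: t''') hcov' c y rfl this
          have hby : b < y := lt_of_lt_of_le hbc.lt hcy
          have hxy' : a < y := lt_trans hab.lt hby
          have hc : c = Ω (r ++ [b]) b y := hfac.1 (by simp)
          have hiff := ((hΩ a y hxy' r ⟨hrne, hrhead, hrlast, hrcov⟩).2 b hab hby).1
          exact hiff.mpr (by rw [← hc]; exact hb)

/-- Proposition 5.6: if a maximal chain `m` of a rooted interval `[x,y]_r` is not the
first atom chain `c(r,x,y)`, then `m` contains a pseudo descent. -/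
theorem stmt10 {P : Type*} [PartialOrder P] [BoundedOrder P] [Fintype P]
    (Ω : List P → P → P → P) (hΩ : IsRFAS Ω)
    (x y : P) (hxy : x ≤ y) (r : List P) (hr : RootOf r x)
    (m : List P) (hm : SatFromTo m x y) (hne : ¬ IsFAC Ω y r m) :
    HasPseudoDescent Ω r m := by
  cases hΩ with
  | inl h1 =>
    exfalso
    obtain ⟨hne', hh, hl, hc⟩ := hm
    have hlen := h1 m hc
    apply hne
    cases m with
    | nil => trivial
    | cons a t =>
      cases t with
      | nil => trivial
      | cons b t' =>
        cases t' with
        | nil => exact ⟨fun h => absurd rfl h, trivial⟩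
        | cons c t'' => simp at hlen
  | inr h2 =>
    by_contra hpd
    exact hne (key_fac Ω h2 y m r x hr hm hpd)
end

section
/- Let P be a finite bounded poset with an RFAS Ω. If m is a maximal chain of P with m ≠ c({0̂},0̂,1̂), then there exists a finite sequence of maximal chains c({0̂},0̂,1̂) → m₁ → m₂ → ⋯ → m. -/
open scoped Classical

variable {P : Type*} [PartialOrder P] [BoundedOrder P]

/-!
Induct downwards on `x`, showing that every maximal chain through the root `r` of `x` is
reached from the chain following `r` and then the first atoms up to `⊤`. If the chain leaves `x`
through the first atom, induction applies above it. For any other atom `u` with `b` the first atom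
above `u`, either `u = Ω(r, x, b)` or `x ⋖ u ⋖ b` is a pseudo descent, whose replacement by the
first atom chain of `[x, b]` passes through `Ω(r, x, b)`; by induction, the first atom completion
through `Ω(r, x, b)` then precedes the one through `u`. Condition (ii) of an RFAS provides a
sequence of atoms linked in this way from `Ω(r, x, ⊤)` to the atom of the given chain.
-/

section SaturatedChains

variable {P : Type*} [PartialOrder P]

lemma satFromTo_singleton {w x y : P} : SatFromTo [w] x y ↔ w = x ∧ w = y := by
  simp [SatFromTo, CoverList, eq_comm]

lemma satFromTo_cons_cons {w w' x y : P} {t : List P} :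
    SatFromTo (w :: w' :: t) x y ↔ w = x ∧ w ⋖ w' ∧ SatFromTo (w' :: t) w' y := by
  simp [SatFromTo, CoverList, and_left_comm]

lemma SatFromTo.exists_eq_cons {l : List P} {x y : P} (h : SatFromTo l x y) :
    ∃ s, l = x :: s :=
  ⟨l.tail, List.eq_cons_of_mem_head? h.2.1⟩

lemma SatFromTo.append {u v : List P} {x b y : P} (hu : SatFromTo u x b)
    (hv : SatFromTo (b :: v) b y) : SatFromTo (u ++ v) x y := by
  induction u generalizing x with
  | nil => exact absurd rfl hu.1
  | cons w u ih =>
    rcases u with _ | ⟨w', u⟩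
    · obtain ⟨rfl, rfl⟩ := satFromTo_singleton.mp hu
      exact hv
    · obtain ⟨rfl, hcov, hu⟩ := satFromTo_cons_cons.mp hu
      exact satFromTo_cons_cons.mpr ⟨rfl, hcov, ih hu⟩

end SaturatedChains

lemma RootOf.snoc {r : List P} {x a : P} (hr : RootOf r x) (h : x ⋖ a) :
    RootOf (r ++ [a]) a :=
  SatFromTo.append hr (satFromTo_cons_cons.mpr ⟨rfl, h, satFromTo_singleton.mpr ⟨rfl, rfl⟩⟩)

lemma isFAC_of_length_le_two {P : Type*} {Ω : List P → P → P → P} {y : P} {r l : List P}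
    (h : l.length ≤ 2) : IsFAC Ω y r l := by
  match l, h with
  | [], _ | [_], _ => trivial
  | [_, _], _ => exact ⟨fun h => absurd rfl h, trivial⟩

lemma stepRel_of_pseudoDescent {Ω : List P → P → P → P} {r c d : List P} {x a b : P}
    (hr : RootOf r x) (hxa : x ⋖ a) (hab : a ⋖ b) (hne : a ≠ Ω r x b)
    (hd : SatFromTo (b :: d) b ⊤) (hc : SatFromTo c x b) (hcf : IsFAC Ω b r c) :
    StepRel Ω (r ++ c.tail ++ d) (r ++ a :: b :: d) := by
  obtain ⟨c, rfl⟩ := hc.exists_eq_cons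
  have hm' : SatFromTo (x :: a :: b :: d) x ⊤ :=
    satFromTo_cons_cons.mpr ⟨rfl, hxa, satFromTo_cons_cons.mpr ⟨rfl, hab, hd⟩⟩
  refine ⟨?_, hr.append hm', x, a, b, r, d, x :: c, hr, hxa, hab, hne, rfl, hc, hcf, rfl⟩
  rw [List.tail_cons, List.append_assoc]
  exact hr.append (hc.append hd)

/-- The second disjunct of `IsRFAS`. -/
def RFASAxioms (Ω : List P → P → P → P) : Prop :=
  ∀ x y : P, x < y → ∀ r : List P, RootOf r x →
      (x ⋖ Ω r x y ∧ Ω r x y ≤ y) ∧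
      ∀ a : P, x ⋖ a → a < y →
        (a = Ω r x y ↔ a = Ω r x (Ω (r ++ [a]) a y)) ∧
        (a ≠ Ω r x y →
          ∃ (p : ℕ) (A B : ℕ → P), 1 ≤ p ∧
            (∀ i, 1 ≤ i → i ≤ p → x ⋖ A i ∧ A i ≤ y) ∧
            A p = Ω r x (Ω (r ++ [a]) a y) ∧ A 1 = Ω r x y ∧
            ∀ i, 1 ≤ i → i ≤ p - 1 →
              B i = Ω (r ++ [A (i + 1)]) (A (i + 1)) y ∧ A i = Ω r x (B i))

attribute [local instance] WellFoundedGT.toWellFoundedRelation in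
/-- The first atom chain `c(r, x, y)` without its bottom element `x`. -/
noncomputable def firstAtomChainTail {P : Type*} [PartialOrder P] [Fintype P]
    (Ω : List P → P → P → P) (y : P) (r : List P) (x : P) : List P :=
  if x < y ∧ x < Ω r x y then
    Ω r x y :: firstAtomChainTail Ω y (r ++ [Ω r x y]) (Ω r x y)
  else []
termination_by x
decreasing_by exact ‹x < y ∧ x < Ω r x y›.2

lemma firstAtomChainTail_self {P : Type*} [PartialOrder P] [Fintype P]
    (Ω : List P → P → P → P) (y : P) (r : List P) : firstAtomChainTail Ω y r y = [] := by
  rw [firstAtomChainTail, if_neg (fun h => lt_irrefl y h.1)]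

noncomputable def firstAtomCompletion [Fintype P] (Ω : List P → P → P → P) (r : List P)
    (w : P) : List P :=
  r ++ w :: firstAtomChainTail Ω ⊤ (r ++ [w]) w

section FirstAtomChain

variable [Fintype P] {Ω : List P → P → P → P} (hΩ : RFASAxioms Ω)
include hΩ

lemma firstAtomChainTail_of_lt {x y : P} {r : List P} (hr : RootOf r x) (h : x < y) :
    firstAtomChainTail Ω y r x =
      Ω r x y :: firstAtomChainTail Ω y (r ++ [Ω r x y]) (Ω r x y) := by
  rw [firstAtomChainTail, if_pos ⟨h, (hΩ x y h r hr).1.1.lt⟩]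

lemma satFromTo_firstAtomChain {x y : P} {r : List P} (hr : RootOf r x) (h : x ≤ y) :
    SatFromTo (x :: firstAtomChainTail Ω y r x) x y := by
  induction x using WellFoundedGT.induction generalizing r with
  | _ x ih =>
    rcases h.lt_or_eq with h | rfl
    · obtain ⟨hcov, hle⟩ := (hΩ x y h r hr).1
      rw [firstAtomChainTail_of_lt hΩ hr h]
      exact satFromTo_cons_cons.mpr ⟨rfl, hcov, ih _ hcov.lt (hr.snoc hcov) hle⟩
    · rw [firstAtomChainTail_self]
      exact satFromTo_singleton.mpr ⟨rfl, rfl⟩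

lemma isFAC_firstAtomChain {x y : P} {r : List P} (hr : RootOf r x) (h : x ≤ y) :
    IsFAC Ω y r (x :: firstAtomChainTail Ω y r x) := by
  induction x using WellFoundedGT.induction generalizing r with
  | _ x ih =>
    rcases h.lt_or_eq with h | rfl
    · obtain ⟨hcov, hle⟩ := (hΩ x y h r hr).1
      rw [firstAtomChainTail_of_lt hΩ hr h]
      exact ⟨fun _ => rfl, ih _ hcov.lt (hr.snoc hcov) hle⟩
    · rw [firstAtomChainTail_self]
      trivial

lemma exists_stepRel_firstAtomCompletion {r : List P} {x u : P} (hr : RootOf r x)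
    (hxu : x ⋖ u) (hu : u < ⊤) (hne : u ≠ Ω r x (Ω (r ++ [u]) u ⊤)) :
    ∃ s, SatFromTo (Ω r x (Ω (r ++ [u]) u ⊤) :: s) (Ω r x (Ω (r ++ [u]) u ⊤)) ⊤ ∧
      StepRel Ω (r ++ Ω r x (Ω (r ++ [u]) u ⊤) :: s) (firstAtomCompletion Ω r u) := by
  set b := Ω (r ++ [u]) u ⊤
  have hru := hr.snoc hxu
  have hub : u ⋖ b := (hΩ u ⊤ hu _ hru).1.1
  have hxb : x < b := hxu.lt.trans hub.lt
  have hd := satFromTo_firstAtomChain hΩ (hru.snoc hub) le_top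
  have hc := satFromTo_firstAtomChain hΩ hr hxb.le
  have hstep := stepRel_of_pseudoDescent hr hxu hub hne hd hc (isFAC_firstAtomChain hΩ hr hxb.le)
  rw [firstAtomChainTail_of_lt hΩ hr hxb] at hc hstep
  obtain ⟨-, -, hv⟩ := satFromTo_cons_cons.mp hc
  rw [firstAtomCompletion, firstAtomChainTail_of_lt hΩ hru hu]
  rw [List.tail_cons, List.append_assoc, List.cons_append] at hstep
  exact ⟨_, hv.append hd, hstep⟩

lemma reflTransGen_firstAtomCompletion {r : List P} {x u v : P} (hr : RootOf r x)
    (hxu : x ⋖ u) (hu : u < ⊤) (hv : v = Ω r x (Ω (r ++ [u]) u ⊤))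
    (reach : ∀ w, x ⋖ w → ∀ s, SatFromTo (w :: s) w ⊤ →
      Relation.ReflTransGen (StepRel Ω) (firstAtomCompletion Ω r w) (r ++ w :: s)) :
    Relation.ReflTransGen (StepRel Ω) (firstAtomCompletion Ω r v)
      (firstAtomCompletion Ω r u) := by
  obtain rfl | hne := eq_or_ne u v
  · exact .refl
  subst hv
  obtain ⟨s, hs, hstep⟩ := exists_stepRel_firstAtomCompletion hΩ hr hxu hu hne
  have hxv : x ⋖ Ω r x (Ω (r ++ [u]) u ⊤) := by
    obtain ⟨hub, -⟩ := (hΩ u ⊤ hu _ (hr.snoc hxu)).1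
    exact (hΩ x _ (hxu.lt.trans hub.lt) r hr).1.1
  exact (reach _ hxv s hs).tail hstep

lemma reflTransGen_append_firstAtomChainTail {r s : List P} {x : P} (hr : RootOf r x)
    (hs : SatFromTo (x :: s) x ⊤) :
    Relation.ReflTransGen (StepRel Ω) (r ++ firstAtomChainTail Ω ⊤ r x) (r ++ s) := by
  induction x using WellFoundedGT.induction generalizing r s with
  | _ x ih =>
  rcases s with _ | ⟨a, t⟩
  · obtain ⟨-, rfl⟩ := satFromTo_singleton.mp hs
    rw [firstAtomChainTail_self]
  obtain ⟨-, hxa, hat⟩ := satFromTo_cons_cons.mp hs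
  have hx : x < ⊤ := hxa.lt.trans_le le_top
  have reach : ∀ w, x ⋖ w → ∀ s, SatFromTo (w :: s) w ⊤ →
      Relation.ReflTransGen (StepRel Ω) (firstAtomCompletion Ω r w) (r ++ w :: s) :=
    fun w hw s hs => by simpa [firstAtomCompletion] using ih w hw.lt (hr.snoc hw) hs
  rw [firstAtomChainTail_of_lt hΩ hr hx]
  by_cases ha : a = Ω r x ⊤
  · exact ha ▸ reach a hxa t hat
  have ha_top : a < ⊤ := by
    refine lt_top_iff_ne_top.mpr fun h => ha ?_
    rw [h] at hxa ⊢
    exact ((eq_top_or_lt_top _).resolve_right (hxa.2 (hΩ x ⊤ hx r hr).1.1.lt)).symm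
  have atom_lt_top : ∀ w, x ⋖ w → w < ⊤ := fun w hw =>
    lt_top_iff_ne_top.mpr fun h => (h ▸ hw).2 hxa.lt ha_top
  obtain ⟨p, A, B, hp, hA, hAp, hA1, hB⟩ := ((hΩ x ⊤ hx r hr).2 a hxa ha_top).2 ha
  have hchain : Relation.ReflTransGen (StepRel Ω) (firstAtomCompletion Ω r (A 1))
      (firstAtomCompletion Ω r (A p)) := by
    refine (reflTransGen_of_succ_of_le (fun i j => Relation.ReflTransGen (StepRel Ω)
      (firstAtomCompletion Ω r (A i)) (firstAtomCompletion Ω r (A j))) (fun i hi => ?_) hp).lift'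
      (fun i => firstAtomCompletion Ω r (A i)) fun _ _ h => h
    obtain ⟨hi1, hip⟩ := Set.mem_Ico.mp hi
    obtain ⟨hBi, hAi⟩ := hB i hi1 (by omega)
    have hxA := (hA (i + 1) (by omega) hip).1
    rw [Order.succ_eq_add_one]
    exact reflTransGen_firstAtomCompletion hΩ hr hxA (atom_lt_top _ hxA) (hBi ▸ hAi) reach
  rw [hA1] at hchain
  exact hchain.trans ((reflTransGen_firstAtomCompletion hΩ hr hxa ha_top hAp reach).trans
    (reach a hxa t hat))

end FirstAtomChain

/-- Proposition 5.10: for any maximal chain `m` which is not the first atom chain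
`c({⊥},⊥,⊤)` there is a sequence `c({⊥},⊥,⊤) → m₁ → m₂ → ⋯ → m`. -/
theorem stmt12 {P : Type*} [PartialOrder P] [BoundedOrder P] [Fintype P]
    (Ω : List P → P → P → P) (hΩ : IsRFAS Ω)
    (m : List P) (hm : MaxChainOfP m) (hne : ¬ IsFAC Ω ⊤ [(⊥ : P)] m) :
    ∃ c : List P, MaxChainOfP c ∧ IsFAC Ω ⊤ [(⊥ : P)] c ∧
      Relation.TransGen (StepRel Ω) c m := by
  rcases hΩ with hshort | hΩ
  · exact absurd (isFAC_of_length_le_two (hshort m hm.2.2.2)) hne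
  obtain ⟨s, rfl⟩ := hm.exists_eq_cons
  have hroot : RootOf [(⊥ : P)] ⊥ := satFromTo_singleton.mpr ⟨rfl, rfl⟩
  have hfac : IsFAC Ω ⊤ [⊥] (⊥ :: firstAtomChainTail Ω ⊤ [⊥] ⊥) :=
    isFAC_firstAtomChain hΩ hroot bot_le
  refine ⟨_, satFromTo_firstAtomChain hΩ hroot bot_le, hfac, ?_⟩
  rcases Relation.reflTransGen_iff_eq_or_transGen.mp
    (reflTransGen_append_firstAtomChainTail hΩ hroot hm) with h | h
  · exact absurd (List.append_cancel_left h ▸ hfac) hne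
  · exact h
end
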